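/- Let S be a finite subset of a group G with |S| ≥ 4 and S closed under inversion and not containing the identity. Then the elements of S can be arranged in a cyclic sequence g₁, g₂, …, g_{|S|} such that gᵢ + g_{i+1} ≠ 0 for all i (indices modulo |S|). -/

import Mathlib

/-!
Only `y = -x` is forbidden after `x`, and the argument works for any involution `σ` in place of
negation. Call `x ∈ S` unpartnered if `σ x ∉ S ∖ {x}`; the other elements come in pairs
`{x, σ x}`. Fix a linear order, let `L = [r₁, …, rₘ]` list the smaller elements of the pairs and
`F` the unpartnered ones. A list drawn from `L ∪ F`, or from `σ L ∪ F`, never contains both `x`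
and `σ x`, so in the cycle `L ++ F₁ ++ σ L ++ F₂` (with `F₁ ++ F₂ = F`) only the two junctions
can fail. Since `2m + |F| = |S| ≥ 4`, either `m ≥ 2`, and `F₁ = []` works because `rₘ ≠ r₁`, or
`|F| ≥ 2`, and an unpartnered element can be put at each junction.
-/

open Function

theorem Cycle.chain_coe_append {α : Type*} {r : α → α → Prop} {l₁ l₂ : List α}
    (hl₁ : l₁ ≠ []) (hl₂ : l₂ ≠ []) (h₁ : l₁.IsChain r) (h₂ : l₂.IsChain r)
    (h₁₂ : r (l₁.getLast hl₁) (l₂.head hl₂)) (h₂₁ : r (l₂.getLast hl₂) (l₁.head hl₁)) :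
    Cycle.Chain r ↑(l₁ ++ l₂) := by
  obtain ⟨a, t, rfl⟩ := List.exists_cons_of_ne_nil hl₁
  rw [List.cons_append, Cycle.chain_coe_cons, List.append_assoc, ← List.cons_append]
  refine h₁.append (h₂.append (List.isChain_singleton a) ?_) ?_
  · simpa [List.getLast?_eq_some_getLast hl₂] using h₂₁
  · simpa [List.getLast?_eq_some_getLast hl₁, List.head?_eq_some_head hl₂] using h₁₂

theorem List.Nodup.getLast_ne_head {α : Type*} {l : List α} (hl : l.Nodup) (hne : l ≠ [])
    (hlen : 1 < l.length) : l.getLast hne ≠ l.head hne := by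
  rw [List.getLast_eq_getElem, List.head_eq_getElem, Ne, hl.getElem_inj_iff]
  omega

theorem List.exists_zmod_of_cycle_chain {α : Type*} {r : α → α → Prop} {l : List α}
    (hl : l.Nodup) (hne : l ≠ []) (h : Cycle.Chain r l) :
    ∃ f : ZMod l.length → α, Injective f ∧ (∀ a, f a ∈ l) ∧ (∀ x ∈ l, ∃ a, f a = x) ∧
      ∀ a, r (f a) (f (a + 1)) := by
  have hpos : 0 < l.length := List.length_pos_iff.2 hne
  have : NeZero l.length := ⟨hpos.ne'⟩
  have hwrap : (l ++ [l.head hne]).IsChain r := by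
    obtain ⟨a, t, rfl⟩ := List.exists_cons_of_ne_nil hne
    simpa using h
  have hnext (i : ℕ) (hi : i < l.length) :
      r l[i] (l[(i + 1) % l.length]'(Nat.mod_lt _ hpos)) := by
    have := hwrap.getElem i (by simp; omega)
    rw [List.getElem_append_left hi] at this
    rcases Nat.lt_or_ge (i + 1) l.length with hlt | hge
    · rw [List.getElem_append_left hlt] at this
      simpa [Nat.mod_eq_of_lt hlt] using this
    · have hi' : i + 1 = l.length := by omega
      rw [List.getElem_append_right (by omega)] at this
      simpa [hi', List.head_eq_getElem] using this
  refine ⟨fun a => l[a.val]'(ZMod.val_lt a),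
    fun a b hab => ZMod.val_injective _ (hl.getElem_inj_iff.1 hab),
    fun a => List.getElem_mem _, fun x hx => ?_, fun a => ?_⟩
  · obtain ⟨i, hi, rfl⟩ := List.getElem_of_mem hx
    exact ⟨i, by simp [ZMod.val_natCast, Nat.mod_eq_of_lt hi]⟩
  · obtain ⟨i, hi, rfl⟩ : ∃ i < l.length, (i : ZMod l.length) = a :=
      ⟨a.val, ZMod.val_lt a, ZMod.natCast_zmod_val a⟩
    have hsucc : (i : ZMod l.length) + 1 = ((i + 1 : ℕ) : ZMod l.length) := by push_cast; rfl
    simp only [hsucc, ZMod.val_natCast, Nat.mod_eq_of_lt hi]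
    exact hnext i hi

section Involution

variable {α : Type*} {σ : α → α}

def IsPairFree (σ : α → α) (l : List α) : Prop := ∀ x ∈ l, σ x ∈ l → σ x = x

theorem List.Nodup.isChain_apply_ne {l : List α} (hl : l.Nodup) (h : IsPairFree σ l) :
    l.IsChain (fun x y => σ x ≠ y) := by
  refine (hl.pairwise_of_forall_ne (r := fun x y => σ x ≠ y) ?_).isChain
  rintro x hx _ hy hxy rfl
  exact hxy (h x hx hy).symm

theorem cycle_chain_append_of_isPairFree {A B : List α} (hAB : (A ++ B).Nodup)
    (hA : IsPairFree σ A) (hB : IsPairFree σ B) (hA₀ : A ≠ []) (hB₀ : B ≠ [])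
    (h₁ : σ (A.getLast hA₀) ≠ B.head hB₀) (h₂ : σ (B.getLast hB₀) ≠ A.head hA₀) :
    Cycle.Chain (fun x y => σ x ≠ y) ↑(A ++ B) :=
  Cycle.chain_coe_append hA₀ hB₀ (hAB.of_append_left.isChain_apply_ne hA)
    (hAB.of_append_right.isChain_apply_ne hB) h₁ h₂

variable [LinearOrder α] (σ) (S : Finset α)

def lowerPartners : Finset α := {x ∈ S | σ x ∈ S ∧ x < σ x}

def unpartnered : Finset α := {x ∈ S | σ x ∈ S → σ x = x}

noncomputable def arrangement (F₁ F₂ : List α) : List α :=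
  (lowerPartners σ S).toList ++ F₁ ++ ((lowerPartners σ S).toList.map σ ++ F₂)

variable {σ S} {F₁ F₂ : List α}

theorem mem_lowerPartners_toList {x : α} :
    x ∈ (lowerPartners σ S).toList ↔ x ∈ S ∧ σ x ∈ S ∧ x < σ x := by
  simp [lowerPartners]

theorem mem_map_lowerPartners_toList (hσ : Involutive σ) {x : α} :
    x ∈ (lowerPartners σ S).toList.map σ ↔ x ∈ S ∧ σ x ∈ S ∧ σ x < x := by
  simp only [List.mem_map, Finset.mem_toList, lowerPartners, Finset.mem_filter]
  constructor
  · rintro ⟨y, ⟨hy, hσy, hlt⟩, rfl⟩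
    exact ⟨hσy, by rwa [hσ], by rwa [hσ]⟩
  · rintro ⟨hx, hσx, hlt⟩
    exact ⟨σ x, ⟨hσx, by rwa [hσ], by rwa [hσ]⟩, hσ x⟩

theorem apply_ne_of_mem_unpartnered {x y : α} (hx : x ∈ unpartnered σ S) (hy : y ∈ S)
    (hxy : x ≠ y) : σ x ≠ y := by
  rintro rfl
  exact hxy ((Finset.mem_filter.1 hx).2 hy).symm

theorem nodup_arrangement (hσ : Involutive σ) (hF : F₁ ++ F₂ = (unpartnered σ S).toList) :
    (arrangement σ S F₁ F₂).Nodup := by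
  have hFn : (F₁ ++ F₂).Nodup := hF ▸ Finset.nodup_toList _
  have hF₁₂ : ∀ x, x ∈ F₁ ∨ x ∈ F₂ → x ∈ S ∧ (σ x ∈ S → σ x = x) := fun x hx =>
    Finset.mem_filter.1 (Finset.mem_toList.1 (hF ▸ List.mem_append.2 hx))
  simp only [arrangement, List.nodup_append, List.mem_append, mem_lowerPartners_toList,
    mem_map_lowerPartners_toList hσ] at hFn ⊢
  refine ⟨⟨Finset.nodup_toList _, hFn.1, ?_⟩,
    ⟨(Finset.nodup_toList _).map hσ.injective, hFn.2.1, ?_⟩, ?_⟩ <;> grind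

theorem mem_arrangement_iff (hσ : Involutive σ)
    (hF : F₁ ++ F₂ = (unpartnered σ S).toList) {x : α} :
    x ∈ arrangement σ S F₁ F₂ ↔ x ∈ S := by
  have hF₁₂ : x ∈ F₁ ∨ x ∈ F₂ ↔ x ∈ S ∧ (σ x ∈ S → σ x = x) := by
    rw [← List.mem_append, hF, Finset.mem_toList, unpartnered, Finset.mem_filter]
  simp only [arrangement, List.mem_append, mem_lowerPartners_toList,
    mem_map_lowerPartners_toList hσ]
  grind

theorem isPairFree_lowerPartners_append (hσ : Involutive σ)
    (hF : F₁ ++ F₂ = (unpartnered σ S).toList) :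
    IsPairFree σ ((lowerPartners σ S).toList ++ F₁) := by
  have hF₁ : ∀ x ∈ F₁, x ∈ S ∧ (σ x ∈ S → σ x = x) := fun x hx =>
    Finset.mem_filter.1 (Finset.mem_toList.1 (hF ▸ List.mem_append_left _ hx))
  simp only [IsPairFree, List.mem_append, mem_lowerPartners_toList]
  intro x hx hσx
  have := hσ x
  grind

theorem isPairFree_map_lowerPartners_append (hσ : Involutive σ)
    (hF : F₁ ++ F₂ = (unpartnered σ S).toList) :
    IsPairFree σ ((lowerPartners σ S).toList.map σ ++ F₂) := by
  have hF₂ : ∀ x ∈ F₂, x ∈ S ∧ (σ x ∈ S → σ x = x) := fun x hx =>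
    Finset.mem_filter.1 (Finset.mem_toList.1 (hF ▸ List.mem_append_right _ hx))
  simp only [IsPairFree, List.mem_append, mem_map_lowerPartners_toList hσ]
  intro x hx hσx
  have := hσ x
  grind

theorem card_eq_two_mul_card_lowerPartners_add_card_unpartnered (hσ : Involutive σ) :
    S.card = 2 * (lowerPartners σ S).card + (unpartnered σ S).card := by
  have hF := List.nil_append (unpartnered σ S).toList
  have hS : (arrangement σ S [] _).toFinset = S :=
    Finset.ext fun x => List.mem_toFinset.trans (mem_arrangement_iff hσ hF)
  conv_lhs => rw [← hS, List.toFinset_card_of_nodup (nodup_arrangement hσ hF)]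
  simp only [arrangement, List.length_append, List.length_map, List.length_nil,
    Finset.length_toList]
  omega

theorem cycle_chain_arrangement_nil (hσ : Involutive σ) (hL : 2 ≤ (lowerPartners σ S).card) :
    Cycle.Chain (fun x y => σ x ≠ y) ↑(arrangement σ S [] (unpartnered σ S).toList) := by
  have hF := List.nil_append (unpartnered σ S).toList
  have hnd := nodup_arrangement hσ hF
  have hA := isPairFree_lowerPartners_append hσ hF
  unfold arrangement at hnd ⊢
  rw [List.append_nil] at hnd hA ⊢
  have hL₀ : (lowerPartners σ S).toList ≠ [] :=
    List.ne_nil_of_length_pos (by rw [Finset.length_toList]; omega)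
  have hσL₀ := (List.map_eq_nil_iff (f := σ)).not.2 hL₀
  have hB₀ := List.append_ne_nil_of_left_ne_nil hσL₀ (unpartnered σ S).toList
  have hhead : ((lowerPartners σ S).toList.map σ ++ (unpartnered σ S).toList).head hB₀ =
      σ ((lowerPartners σ S).toList.head hL₀) := by
    rw [List.head_append_of_ne_nil hσL₀, List.head_map]
  refine cycle_chain_append_of_isPairFree hnd hA (isPairFree_map_lowerPartners_append hσ hF)
    hL₀ hB₀ ?_ ?_
  · rw [hhead]
    exact hσ.injective.ne ((Finset.nodup_toList _).getLast_ne_head hL₀ (by simp; omega))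
  · intro h
    refine hnd.of_append_right.getLast_ne_head hB₀ (by simp; omega) ?_
    rw [hhead, ← h, hσ]

theorem cycle_chain_arrangement_singleton {f : α} (hσ : Involutive σ)
    (hF : [f] ++ F₂ = (unpartnered σ S).toList) (hF₂ : F₂ ≠ []) :
    Cycle.Chain (fun x y => σ x ≠ y) ↑(arrangement σ S [f] F₂) := by
  have hnd := nodup_arrangement hσ hF
  have hmem (x : α) := (mem_arrangement_iff hσ hF (x := x)).1
  unfold arrangement at hnd hmem ⊢
  have hdisj := List.disjoint_of_nodup_append hnd
  have hA₀ : (lowerPartners σ S).toList ++ [f] ≠ [] := by simp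
  have hB₀ : (lowerPartners σ S).toList.map σ ++ F₂ ≠ [] := by simp [hF₂]
  refine cycle_chain_append_of_isPairFree hnd (isPairFree_lowerPartners_append hσ hF)
    (isPairFree_map_lowerPartners_append hσ hF) hA₀ hB₀ ?_ ?_
  · have hf : f ∈ unpartnered σ S := by rw [← Finset.mem_toList, ← hF]; simp
    rw [List.getLast_append_of_ne_nil _ (List.cons_ne_nil f []), List.getLast_singleton]
    refine apply_ne_of_mem_unpartnered hf (hmem _ (List.mem_append_right _ (List.head_mem _))) ?_
    exact fun h => hdisj (by simp) (h ▸ List.head_mem hB₀)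
  · have hl : F₂.getLast hF₂ ∈ unpartnered σ S := by
      rw [← Finset.mem_toList, ← hF]; simp [List.getLast_mem]
    rw [List.getLast_append_of_ne_nil _ hF₂]
    refine apply_ne_of_mem_unpartnered hl (hmem _ (List.mem_append_left _ (List.head_mem _))) ?_
    exact fun h => hdisj (List.head_mem hA₀) (h ▸ by simp [List.getLast_mem])

end Involution

theorem exists_cycle_chain_apply_ne {α : Type*} {σ : α → α} (hσ : Involutive σ) (S : Finset α)
    (hS : 4 ≤ S.card) :
    ∃ l : List α, l.Nodup ∧ (∀ x, x ∈ l ↔ x ∈ S) ∧ Cycle.Chain (fun x y => σ x ≠ y) ↑l := by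
  classical
  let : LinearOrder α := linearOrderOfSTO WellOrderingRel
  suffices ∃ F₁ F₂, F₁ ++ F₂ = (unpartnered σ S).toList ∧
      Cycle.Chain (fun x y => σ x ≠ y) ↑(arrangement σ S F₁ F₂) by
    obtain ⟨F₁, F₂, hF, hchain⟩ := this
    exact ⟨_, nodup_arrangement hσ hF, fun x => mem_arrangement_iff hσ hF, hchain⟩
  have hcard := card_eq_two_mul_card_lowerPartners_add_card_unpartnered hσ (S := S)
  obtain hL | hF : 2 ≤ (lowerPartners σ S).card ∨ 2 ≤ (unpartnered σ S).card := by omega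
  · exact ⟨[], _, List.nil_append _, cycle_chain_arrangement_nil hσ hL⟩
  · obtain ⟨f, F₂, hfF⟩ := List.exists_cons_of_ne_nil (l := (unpartnered σ S).toList)
      (List.ne_nil_of_length_pos (by rw [Finset.length_toList]; omega))
    have hF₂ : F₂ ≠ [] := List.ne_nil_of_length_pos (by
      have := congrArg List.length hfF
      simp only [Finset.length_toList, List.length_cons] at this
      omega)
    exact ⟨[f], F₂, hfF.symm, cycle_chain_arrangement_singleton hσ hfF.symm hF₂⟩

theorem stmt10_general {G : Type*} [AddGroup G] (S : Finset G)
    (hcard : 4 ≤ S.card) :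
    ∃ f : ZMod S.card → G, Function.Injective f ∧ (∀ a, f a ∈ S) ∧
      (∀ s ∈ S, ∃ a, f a = s) ∧ ∀ a : ZMod S.card, f a + f (a + 1) ≠ 0 := by
  classical
  obtain ⟨l, hnd, hmem, hchain⟩ := exists_cycle_chain_apply_ne neg_involutive S hcard
  have hlen : S.card = l.length := by
    rw [← List.toFinset_card_of_nodup hnd]
    exact congrArg Finset.card (Finset.ext fun x => by simp [hmem]).symm
  have hne : l ≠ [] := List.ne_nil_of_length_pos (by omega)
  rw [hlen]
  obtain ⟨f, hinj, hfl, hlf, hadj⟩ := List.exists_zmod_of_cycle_chain hnd hne hchain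
  exact ⟨f, hinj, fun a => (hmem _).1 (hfl a), fun s hs => hlf s ((hmem s).2 hs),
    fun a => by simpa [add_eq_zero_iff_neg_eq] using hadj a⟩

/-- A finite subset `S` of a group, closed under negation, not containing `0`, with
`|S| ≥ 4`, can be arranged cyclically so that no two cyclically adjacent elements sum to
zero. -/
theorem stmt10 {G : Type*} [AddGroup G] [DecidableEq G] (S : Finset G)
    (hcard : 4 ≤ S.card) (h0 : (0 : G) ∉ S) (hneg : ∀ s ∈ S, -s ∈ S) :
    ∃ f : ZMod S.card → G, Function.Injective f ∧ (∀ a, f a ∈ S) ∧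
      (∀ s ∈ S, ∃ a, f a = s) ∧ ∀ a : ZMod S.card, f a + f (a + 1) ≠ 0 :=
  stmt10_general S hcard
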